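/- Let z and λ be positive real numbers and set ρ(z) = π^{−1/2}·(Γ(z/2 + 1))^{1/z}, where Γ is the Gamma function. Then ∫_{0}^{∞} exp(−λ·ρ(z)²·y^{2/z}) dy = π^{z/2}·λ^{−z/2}. Equivalently, for the operator D_z = ρ(z)·F·|Y|^{1/z}, where Y is a self-adjoint operator affiliated to a type II_∞ factor with spectral measure Tr(χ_E(Y)) = (1/2)∫_E dy, one has Tr(e^{−λ D_z²}) = π^{z/2}λ^{−z/2} for all λ > 0, which is the defining formula ∫ e^{−λ k²} d^z k = π^{z/2}λ^{−z/2} of Dimensional Regularization in dimension z. -/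

import Mathlib

open MeasureTheory

/-- The DimReg normalization constant `ρ(z) = π^{−1/2}·Γ(z/2 + 1)^{1/z}`. -/
noncomputable def dimRegRho (z : ℝ) : ℝ :=
  Real.pi ^ (-(1 / 2 : ℝ)) * (Real.Gamma (z / 2 + 1)) ^ (1 / z)

lemma dimRegRho_pos {z : ℝ} (hz : 0 < z) : 0 < dimRegRho z := by
  have := Real.Gamma_pos_of_pos (show 0 < z / 2 + 1 by linarith)
  unfold dimRegRho
  positivity

/- `ρ(z)^{-z} = π^{z/2}/Γ(z/2+1)` is the volume of the unit ball in dimension `z`, which is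
what makes the Gaussian integral below come out as `π^{z/2}λ^{-z/2}`. -/
lemma dimRegRho_rpow_self {z : ℝ} (hz : 0 < z) :
    dimRegRho z ^ z = Real.pi ^ (-(z / 2)) * Real.Gamma (z / 2 + 1) := by
  have hG := Real.Gamma_pos_of_pos (show 0 < z / 2 + 1 by linarith)
  rw [dimRegRho, Real.mul_rpow (by positivity) (by positivity),
    ← Real.rpow_mul Real.pi_pos.le, ← Real.rpow_mul hG.le, one_div_mul_cancel hz.ne',
    Real.rpow_one]
  ring_nf

/-- **The defining Gaussian identity of Dimensional Regularization in dimension `z`**: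
with `ρ(z) = π^{−1/2}Γ(z/2+1)^{1/z}`, one has
`∫_{0}^{∞} exp(−λ·ρ(z)²·y^{2/z}) dy = π^{z/2}·λ^{−z/2}`, i.e.
`Tr(e^{−λD_z²}) = π^{z/2}λ^{−z/2}` for `D_z = ρ(z)·F·|Y|^{1/z}`. -/
theorem dimreg_gaussian (z lam : ℝ) (hz : 0 < z) (hlam : 0 < lam) :
    (∫ y in Set.Ioi (0 : ℝ), Real.exp (-(lam * dimRegRho z ^ 2 * y ^ (2 / z)))) =
      Real.pi ^ (z / 2) * lam ^ (-(z / 2)) := by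
  have hρ := dimRegRho_pos hz
  have hexp : 1 / (2 / z) = z / 2 ∧ -1 / (2 / z) = -(z / 2) := by
    constructor <;> field_simp
  calc (∫ y in Set.Ioi (0 : ℝ), Real.exp (-(lam * dimRegRho z ^ 2 * y ^ (2 / z))))
      = (lam * dimRegRho z ^ 2) ^ (-(z / 2)) * Real.Gamma (z / 2 + 1) := by
        simpa only [neg_mul, hexp] using
          integral_exp_neg_mul_rpow (by positivity : 0 < 2 / z) (by positivity)
    _ = lam ^ (-(z / 2)) * (dimRegRho z ^ z)⁻¹ * Real.Gamma (z / 2 + 1) := by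
        rw [Real.mul_rpow hlam.le (by positivity), ← Real.rpow_natCast,
          ← Real.rpow_mul hρ.le, show ((2 : ℕ) : ℝ) * -(z / 2) = -z by push_cast; ring,
          Real.rpow_neg hρ.le]
    _ = Real.pi ^ (z / 2) * lam ^ (-(z / 2)) := by
        have hG := Real.Gamma_pos_of_pos (show 0 < z / 2 + 1 by linarith)
        rw [dimRegRho_rpow_self hz, Real.rpow_neg Real.pi_pos.le]
        field_simp
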